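/- Let X₁ ⊆ X₀ and Y₁ ⊆ Y₀ be normed spaces, 0 < α ≤ 1, and suppose T : Xᵢ → Yᵢ is globally α-Hölderian with constant Mᵢ for i = 0, 1. Then for all a ∈ X₀, b ∈ X₁ and t > 0, K(Ta − Tb, t^α; Y₀, Y₁) ≤ 2 max(M₀, M₁) [K(a − b, t; X₀, X₁)]^α. -/

import Mathlib

/-!
Fix a decomposition `a - b = (a - b - c) + c` with `c ∈ X₁`. Then
`Ta - Tb = (Ta - T(b + c)) + (T(b + c) - Tb)` is a decomposition in `Y₀ + Y₁`, and the two
Hölder bounds give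
`K(Ta - Tb, t^α) ≤ M₀ ‖a - b - c‖^α + M₁ (t‖c‖)^α ≤ 2 max(M₀, M₁) (‖a - b - c‖ + t‖c‖)^α`.
Since `s ↦ 2 max(M₀, M₁) s^α` is monotone and continuous on `[0, ∞)`, it commutes with the
infimum over `c`.
-/

open Real

/-- The Peetre K-functional for the couple `(X₀, X₁)`, where `X₁` is embedded
in `X₀` via the additive map `j`. -/
noncomputable def Kfunc {X₀ X₁ : Type*} [NormedAddCommGroup X₀] [NormedAddCommGroup X₁]
    (j : X₁ →+ X₀) (a : X₀) (t : ℝ) : ℝ :=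
  sInf {r : ℝ | ∃ a₁ : X₁, r = ‖a - j a₁‖ + t * ‖a₁‖}

lemma rpow_add_rpow_le_two_mul_rpow_add {x y α : ℝ} (hx : 0 ≤ x) (hy : 0 ≤ y) (hα : 0 ≤ α) :
    x ^ α + y ^ α ≤ 2 * (x + y) ^ α := by
  have hxy : x ^ α ≤ (x + y) ^ α := rpow_le_rpow hx (le_add_of_nonneg_right hy) hα
  have hyx : y ^ α ≤ (x + y) ^ α := rpow_le_rpow hy (le_add_of_nonneg_left hx) hα
  linarith

lemma nonneg_of_holder_of_ne {X Y : Type*} [NormedAddCommGroup X] [NormedAddCommGroup Y]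
    {T : X → Y} {M α : ℝ} (hT : ∀ a b : X, ‖T a - T b‖ ≤ M * ‖a - b‖ ^ α)
    {a b : X} (hab : a ≠ b) : 0 ≤ M :=
  nonneg_of_mul_nonneg_left ((norm_nonneg _).trans (hT a b))
    (rpow_pos_of_pos (norm_pos_iff.mpr (sub_ne_zero.mpr hab)) α)

section Kfunc

variable {X₀ X₁ : Type*} [NormedAddCommGroup X₀] [NormedAddCommGroup X₁] (j : X₁ →+ X₀)

lemma Kfunc_bddBelow (a : X₀) {t : ℝ} (ht : 0 ≤ t) :
    BddBelow {r : ℝ | ∃ a₁ : X₁, r = ‖a - j a₁‖ + t * ‖a₁‖} := by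
  refine ⟨0, ?_⟩
  rintro r ⟨a₁, rfl⟩
  positivity

lemma Kfunc_le (a : X₀) {t : ℝ} (ht : 0 ≤ t) (a₁ : X₁) :
    Kfunc j a t ≤ ‖a - j a₁‖ + t * ‖a₁‖ :=
  csInf_le (Kfunc_bddBelow j a ht) ⟨a₁, rfl⟩

lemma Kfunc_nonneg (a : X₀) {t : ℝ} (ht : 0 ≤ t) : 0 ≤ Kfunc j a t := by
  refine Real.sInf_nonneg ?_
  rintro r ⟨a₁, rfl⟩
  positivity

lemma Kfunc_zero {t : ℝ} (ht : 0 ≤ t) : Kfunc j (0 : X₀) t = 0 :=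
  le_antisymm (by simpa using Kfunc_le j (0 : X₀) ht 0) (Kfunc_nonneg j 0 ht)

lemma le_map_Kfunc {f : ℝ → ℝ} (hf : MonotoneOn f (Set.Ici 0))
    {a : X₀} {t : ℝ} (ht : 0 ≤ t) (hcont : ContinuousAt f (Kfunc j a t)) {c : ℝ}
    (hc : ∀ a₁ : X₁, c ≤ f (‖a - j a₁‖ + t * ‖a₁‖)) :
    c ≤ f (Kfunc j a t) := by
  have hS : ∀ r ∈ {r : ℝ | ∃ a₁ : X₁, r = ‖a - j a₁‖ + t * ‖a₁‖}, r ∈ Set.Ici (0 : ℝ) := by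
    rintro r ⟨a₁, rfl⟩
    exact Set.mem_Ici.mpr (by positivity)
  rw [Kfunc, MonotoneOn.map_csInf_of_continuousWithinAt hcont.continuousWithinAt
    (hf.mono hS) ⟨_, 0, rfl⟩ (Kfunc_bddBelow j a ht)]
  refine le_csInf (Set.Nonempty.image _ ⟨_, 0, rfl⟩) ?_
  rintro _ ⟨r, ⟨a₁, rfl⟩, rfl⟩
  exact hc a₁

end Kfunc

section Holder

variable {X₀ X₁ Y₀ Y₁ : Type*} [NormedAddCommGroup X₀] [NormedAddCommGroup X₁]
  [NormedAddCommGroup Y₀] [NormedAddCommGroup Y₁] {jX : X₁ →+ X₀} {jY : Y₁ →+ Y₀}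
  {T₀ : X₀ → Y₀} {T₁ : X₁ → Y₁}

lemma Kfunc_sub_le_of_compat (hcompat : ∀ a : X₁, jY (T₁ a) = T₀ (jX a))
    (a : X₀) (b c : X₁) {t : ℝ} (ht : 0 ≤ t) :
    Kfunc jY (T₀ a - T₀ (jX b)) t ≤ ‖T₀ a - T₀ (jX (b + c))‖ + t * ‖T₁ (b + c) - T₁ b‖ := by
  have hj : jY (T₁ (b + c) - T₁ b) = T₀ (jX (b + c)) - T₀ (jX b) := by
    rw [map_sub, hcompat, hcompat]
  have h := Kfunc_le jY (T₀ a - T₀ (jX b)) ht (T₁ (b + c) - T₁ b)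
  rwa [hj, sub_sub_sub_cancel_right] at h

lemma Kfunc_sub_le_of_holder (hcompat : ∀ a : X₁, jY (T₁ a) = T₀ (jX a))
    {α M₀ M₁ : ℝ} (hα : 0 ≤ α) (hM : 0 ≤ max M₀ M₁)
    (h0 : ∀ a b : X₀, ‖T₀ a - T₀ b‖ ≤ M₀ * ‖a - b‖ ^ α)
    (h1 : ∀ a b : X₁, ‖T₁ a - T₁ b‖ ≤ M₁ * ‖a - b‖ ^ α)
    (a : X₀) (b c : X₁) {t : ℝ} (ht : 0 ≤ t) :
    Kfunc jY (T₀ a - T₀ (jX b)) (t ^ α) ≤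
      2 * max M₀ M₁ * (‖a - jX b - jX c‖ + t * ‖c‖) ^ α := by
  have h0' : ‖T₀ a - T₀ (jX (b + c))‖ ≤ M₀ * ‖a - jX b - jX c‖ ^ α := by
    simpa [map_add, sub_sub] using h0 a (jX (b + c))
  have h1' : ‖T₁ (b + c) - T₁ b‖ ≤ M₁ * ‖c‖ ^ α := by
    simpa using h1 (b + c) b
  calc Kfunc jY (T₀ a - T₀ (jX b)) (t ^ α)
      ≤ ‖T₀ a - T₀ (jX (b + c))‖ + t ^ α * ‖T₁ (b + c) - T₁ b‖ :=
        Kfunc_sub_le_of_compat hcompat a b c (by positivity)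
    _ ≤ M₀ * ‖a - jX b - jX c‖ ^ α + t ^ α * (M₁ * ‖c‖ ^ α) := by gcongr
    _ = M₀ * ‖a - jX b - jX c‖ ^ α + M₁ * (t * ‖c‖) ^ α := by
        rw [mul_rpow ht (norm_nonneg _)]; ring
    _ ≤ max M₀ M₁ * ‖a - jX b - jX c‖ ^ α + max M₀ M₁ * (t * ‖c‖) ^ α := by
        gcongr
        exacts [le_max_left _ _, le_max_right _ _]
    _ ≤ 2 * max M₀ M₁ * (‖a - jX b - jX c‖ + t * ‖c‖) ^ α := by
        rw [← mul_add, mul_comm 2, mul_assoc]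
        gcongr
        exact rpow_add_rpow_le_two_mul_rpow_add (norm_nonneg _) (by positivity) hα

end Holder

theorem Kfunc_sub_estimate_of_holder_general
    {X₀ X₁ Y₀ Y₁ : Type*}
    [NormedAddCommGroup X₀] [NormedAddCommGroup X₁]
    [NormedAddCommGroup Y₀] [NormedAddCommGroup Y₁]
    (jX : X₁ →+ X₀) (jY : Y₁ →+ Y₀)
    (α : ℝ) (hα0 : 0 < α)
    (T₀ : X₀ → Y₀) (T₁ : X₁ → Y₁)
    (hcompat : ∀ a : X₁, jY (T₁ a) = T₀ (jX a))
    (M₀ M₁ : ℝ)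
    (h0 : ∀ a b : X₀, ‖T₀ a - T₀ b‖ ≤ M₀ * ‖a - b‖ ^ α)
    (h1 : ∀ a b : X₁, ‖T₁ a - T₁ b‖ ≤ M₁ * ‖a - b‖ ^ α) :
    ∀ (a : X₀) (b : X₁) (t : ℝ), 0 < t →
      Kfunc jY (T₀ a - T₀ (jX b)) (t ^ α) ≤
        2 * max M₀ M₁ * (Kfunc jX (a - jX b) t) ^ α := by
  intro a b t ht
  by_cases hab : a = jX b
  · rw [hab, sub_self, sub_self, Kfunc_zero jY (by positivity), Kfunc_zero jX ht.le,
      zero_rpow hα0.ne', mul_zero]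
  have hM : 0 ≤ max M₀ M₁ := (nonneg_of_holder_of_ne h0 hab).trans (le_max_left _ _)
  refine le_map_Kfunc jX (f := fun s => 2 * max M₀ M₁ * s ^ α) ?_ ht.le ?_ fun c => ?_
  · exact fun x hx y _ hxy =>
      mul_le_mul_of_nonneg_left (rpow_le_rpow hx hxy hα0.le) (by positivity)
  · exact continuousAt_const.mul (continuousAt_rpow_const _ _ (Or.inr hα0.le))
  · simpa only [sub_sub] using Kfunc_sub_le_of_holder hcompat hα0.le hM h0 h1 a b c ht.le

/-- If `T` is globally α-Hölderian from `Xᵢ` to `Yᵢ` with constant `Mᵢ` for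
`i = 0,1`, then `K(Ta − Tb, t^α) ≤ 2 max(M₀,M₁) K(a − b, t)^α` for all
`a ∈ X₀`, `b ∈ X₁`, `t > 0`. -/
theorem Kfunc_sub_estimate_of_holder
    {X₀ X₁ Y₀ Y₁ : Type*}
    [NormedAddCommGroup X₀] [NormedAddCommGroup X₁]
    [NormedAddCommGroup Y₀] [NormedAddCommGroup Y₁]
    (jX : X₁ →+ X₀) (jY : Y₁ →+ Y₀)
    (α : ℝ) (hα0 : 0 < α) (hα1 : α ≤ 1)
    (T₀ : X₀ → Y₀) (T₁ : X₁ → Y₁)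
    (hcompat : ∀ a : X₁, jY (T₁ a) = T₀ (jX a))
    (M₀ M₁ : ℝ)
    (h0 : ∀ a b : X₀, ‖T₀ a - T₀ b‖ ≤ M₀ * ‖a - b‖ ^ α)
    (h1 : ∀ a b : X₁, ‖T₁ a - T₁ b‖ ≤ M₁ * ‖a - b‖ ^ α) :
    ∀ (a : X₀) (b : X₁) (t : ℝ), 0 < t →
      Kfunc jY (T₀ a - T₀ (jX b)) (t ^ α) ≤
        2 * max M₀ M₁ * (Kfunc jX (a - jX b) t) ^ α :=
  Kfunc_sub_estimate_of_holder_general jX jY α hα0 T₀ T₁ hcompat M₀ M₁ h0 h1
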